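/- Let H be a set of hypotheses. For every language L, (cl_H(L))^* ⊆ cl_H(L^*), where ^* on languages denotes Kleene star. -/

import Mathlib

/-!
Hypotheses are applied inside arbitrary contexts `u·_·v`, so `cl_H` commutes with contexts: if
`a·L·b ⊆ M` then `a·cl_H(L)·b ⊆ cl_H(M)`. Together with idempotence this gives
`cl_H(A)·cl_H(B) ⊆ cl_H(A·B)`. Hence `cl_H(L^*)` contains `1` and is closed under left
multiplication by `cl_H(L)`, so it contains `cl_H(L)^*`.
-/

/-- The least (pre)fixpoint of `y ↦ x ⊔ s y` (Knaster–Tarski); for monotone `s`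
this gives the least closure above `s`. -/
def lstar {X : Type*} [CompleteLattice X] (s : X → X) (x : X) : X :=
  sInf {y | x ⊔ s y ≤ y}

/-- The one-step function associated with a set `H` of hypotheses `e ≤ f`
(pairs of regular expressions): it adds `u·⟦e⟧·v` whenever `u·⟦f⟧·v ⊆ L`. -/
def onestep {α : Type*} (H : Set (RegularExpression α × RegularExpression α))
    (L : Language α) : Language α :=
  {w | ∃ p ∈ H, ∃ u v : List α,
    (∀ x ∈ p.2.matches', u ++ x ++ v ∈ L) ∧ ∃ x ∈ p.1.matches', w = u ++ x ++ v}

/-- The `H`-closure of a language: the least closure above the one-step function of `H`. -/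
def clH {α : Type*} (H : Set (RegularExpression α × RegularExpression α)) :
    Language α → Language α :=
  lstar (onestep H)

section lstar

variable {X : Type*} [CompleteLattice X] {s : X → X} {x y : X}

theorem lstar_le (h : x ⊔ s y ≤ y) : lstar s x ≤ y :=
  sInf_le h

theorem le_lstar : x ≤ lstar s x :=
  le_sInf fun _ hy => le_sup_left.trans hy

theorem map_lstar_le (hs : Monotone s) : s (lstar s x) ≤ lstar s x :=
  le_sInf fun _ hy => (hs (sInf_le hy)).trans (le_sup_right.trans hy)

theorem lstar_mono (hs : Monotone s) : Monotone (lstar s) := fun _ _ hxy =>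
  lstar_le (sup_le (hxy.trans le_lstar) (map_lstar_le hs))

theorem lstar_lstar_le (hs : Monotone s) : lstar s (lstar s x) ≤ lstar s x :=
  lstar_le (sup_le le_rfl (map_lstar_le hs))

end lstar

section clH

variable {α : Type*} {H : Set (RegularExpression α × RegularExpression α)}

theorem onestep_mono : Monotone (onestep H) := fun _ _ hLM _ ⟨p, hp, u, v, hf, he⟩ =>
  ⟨p, hp, u, v, fun x hx => hLM (hf x hx), he⟩

theorem le_clH (L : Language α) : L ≤ clH H L :=
  le_lstar

theorem onestep_clH_le (L : Language α) : onestep H (clH H L) ≤ clH H L :=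
  map_lstar_le onestep_mono

theorem clH_mono : Monotone (clH H) :=
  lstar_mono onestep_mono

theorem clH_clH_le (L : Language α) : clH H (clH H L) ≤ clH H L :=
  lstar_lstar_le onestep_mono

theorem append_append_mem_clH {L M : Language α} {a b w : List α}
    (h : ∀ x ∈ L, a ++ x ++ b ∈ M) (hw : w ∈ clH H L) : a ++ w ++ b ∈ clH H M := by
  suffices clH H L ≤ {w | a ++ w ++ b ∈ clH H M} from this hw
  refine lstar_le (sup_le (fun x hx => le_clH M (h x hx)) ?_)
  rintro _ ⟨p, hp, u, v, hf, x, hx, rfl⟩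
  refine onestep_clH_le M ⟨p, hp, a ++ u, v ++ b, fun y hy => ?_, x, hx, by simp⟩
  have hy' : a ++ (u ++ y ++ v) ++ b ∈ clH H M := hf y hy
  simpa using hy'

theorem clH_mul_clH_le (A B : Language α) : clH H A * clH H B ≤ clH H (A * B) := by
  rintro _ ⟨w, hw, c, hc, rfl⟩
  have hAc : ∀ a ∈ A, a ++ c ∈ clH H (A * B) := fun a ha => by
    simpa using append_append_mem_clH (a := a) (b := [])
      (fun b hb => by simpa using Language.append_mem_mul ha hb) hc
  have hwc := append_append_mem_clH (a := []) (b := c) (by simpa using hAc) hw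
  simpa using clH_clH_le _ hwc

end clH

/-- `(cl_H(L))^* ⊆ cl_H(L^*)` where `^*` is the Kleene star of languages. -/
theorem clH_kstar_le {α : Type*} (H : Set (RegularExpression α × RegularExpression α))
    (L : Language α) : KStar.kstar (clH H L) ≤ clH H (KStar.kstar L) := by
  refine kstar_le_of_mul_le_right (one_le_kstar.trans (le_clH _)) ?_
  calc clH H L * clH H (KStar.kstar L) ≤ clH H (L * KStar.kstar L) := clH_mul_clH_le _ _
    _ ≤ clH H (KStar.kstar L) := clH_mono mul_kstar_le_kstar
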